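/- Suppose v: [L,M] → ℝ is C² and satisfies (σ₊²(x)/2)v''(x) + μ₊(x)v'(x) − r v(x) = 0 on (L,M), with μ₊(x) ≥ rx for all x, v(M) = M, and v(L) ≥ L. Then v(x) ≥ x for all x ∈ [L,M]. -/

import Mathlib

/-!
On `[L, M]` the function `g = v - id` is only a weak supersolution of
`(σ₊²/2) g'' + μ₊ g' - r g ≤ 0`. Adding `ε (exp M - exp x)`, which is nonnegative on `[L, M]`
and is a strict supersolution because `σ₊ > 0` and `μ₊ ≥ r x ≥ 0`, makes the inequality strict
while keeping nonnegative boundary values. A strict supersolution has no negative interior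
minimum, since there `w' = 0`, `w'' ≥ 0` and `-r w ≥ 0`. Letting `ε → 0` gives `g ≥ 0`.
-/

open Set Filter Topology Real

/-- The operator `L⁺ - r` of the paper, with `σ = σ₊` and `μ = μ₊`. -/
noncomputable def diffusionOp (σ μ : ℝ → ℝ) (r : ℝ) (f : ℝ → ℝ) (x : ℝ) : ℝ :=
  σ x ^ 2 / 2 * deriv (deriv f) x + μ x * deriv f x - r * f x

theorem IsLocalMin.deriv_deriv_nonneg {f : ℝ → ℝ} {x : ℝ} (h : IsLocalMin f x)
    (hc : ContinuousAt f x) : 0 ≤ deriv (deriv f) x := by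
  by_contra! hneg
  have hmax : IsLocalMax f x := isLocalMax_of_deriv_deriv_neg hneg h.deriv_eq_zero hc
  have hconst : f =ᶠ[𝓝 x] fun _ ↦ f x := by
    filter_upwards [h, hmax] with y hy₁ hy₂ using le_antisymm hy₂ hy₁
  have hderiv : deriv f =ᶠ[𝓝 x] fun _ ↦ 0 := by
    simpa using hconst.deriv
  simp [hderiv.deriv_eq] at hneg

theorem nonneg_of_diffusionOp_neg {σ μ w : ℝ → ℝ} {r a b : ℝ} (hr : 0 ≤ r)
    (hw : ContinuousOn w (Icc a b)) (ha : 0 ≤ w a) (hb : 0 ≤ w b)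
    (hLw : ∀ x ∈ Ioo a b, diffusionOp σ μ r w x < 0) : ∀ x ∈ Icc a b, 0 ≤ w x := by
  intro x hx
  obtain ⟨x₀, hx₀, hmin⟩ := isCompact_Icc.exists_isMinOn ⟨x, hx⟩ hw
  refine le_trans ?_ (hmin hx)
  by_contra! hneg
  have hx₀' : x₀ ∈ Ioo a b :=
    ⟨hx₀.1.lt_of_ne (by rintro rfl; linarith), hx₀.2.lt_of_ne (by rintro rfl; linarith)⟩
  have hnhds : Icc a b ∈ 𝓝 x₀ := Icc_mem_nhds hx₀'.1 hx₀'.2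
  have hloc : IsLocalMin w x₀ := hmin.isLocalMin hnhds
  have hLw₀ := hLw x₀ hx₀'
  rw [diffusionOp, hloc.deriv_eq_zero] at hLw₀
  have hw'' : 0 ≤ σ x₀ ^ 2 / 2 * deriv (deriv w) x₀ :=
    mul_nonneg (by positivity) (hloc.deriv_deriv_nonneg (hw.continuousAt hnhds))
  nlinarith [mul_nonpos_of_nonneg_of_nonpos hr hneg.le]

theorem diffusionOp_add {σ μ f g : ℝ → ℝ} {r x : ℝ} (hf : ContDiffAt ℝ 2 f x)
    (hg : ContDiffAt ℝ 2 g x) :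
    diffusionOp σ μ r (f + g) x = diffusionOp σ μ r f x + diffusionOp σ μ r g x := by
  have hderiv : deriv (f + g) =ᶠ[𝓝 x] deriv f + deriv g := by
    filter_upwards [hf.eventually (by simp), hg.eventually (by simp)] with y hfy hgy
    exact deriv_add (hfy.differentiableAt (by simp)) (hgy.differentiableAt (by simp))
  have hf' := (hf.derivWithin (m := 1) (by norm_num)).differentiableAt (by simp)
  have hg' := (hg.derivWithin (m := 1) (by norm_num)).differentiableAt (by simp)
  simp only [diffusionOp, hderiv.deriv_eq, hderiv.eq_of_nhds, deriv_add hf' hg', Pi.add_apply]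
  ring

theorem diffusionOp_exp_barrier_neg {σ μ : ℝ → ℝ} {r ε M x : ℝ} (hr : 0 ≤ r) (hε : 0 < ε)
    (hσ : 0 < σ x) (hμ : r * x ≤ μ x) (hx : 0 ≤ x) (hxM : x ≤ M) :
    diffusionOp σ μ r (fun y ↦ ε * (exp M - exp y) - y) x < 0 := by
  have hderiv : deriv (fun y ↦ ε * (exp M - exp y) - y) = fun y ↦ -(ε * exp y) - 1 := by
    funext y
    exact (((hasDerivAt_exp y).const_sub (exp M)).const_mul ε |>.sub (hasDerivAt_id y)).deriv
      |>.trans (by ring)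
  have hderiv2 : deriv (fun y ↦ -(ε * exp y) - 1) x = -(ε * exp x) :=
    (((hasDerivAt_exp x).const_mul ε).neg.sub_const 1).deriv
  rw [diffusionOp, hderiv, hderiv2]
  have hexp : exp x ≤ exp M := exp_le_exp.mpr hxM
  have hμ₀ : 0 ≤ μ x := (mul_nonneg hr hx).trans hμ
  have hσ_term : 0 < σ x ^ 2 / 2 * (ε * exp x) := by positivity
  have hμ_term : 0 ≤ μ x * (ε * exp x) := by positivity
  have hr_term : 0 ≤ r * (ε * (exp M - exp x)) :=
    mul_nonneg hr (mul_nonneg hε.le (sub_nonneg.mpr hexp))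
  nlinarith

theorem value_dominates_identity_pos_regime_general
    (L M r : ℝ) (hL : 0 < L) (hr : 0 ≤ r)
    (σp μp : ℝ → ℝ)
    (hσpos : ∀ x ∈ Icc L M, 0 < σp x)
    (v : ℝ → ℝ) (hv : ContDiffOn ℝ 2 v (Icc L M))
    (hode : ∀ x ∈ Ioo L M,
      (σp x ^ 2 / 2) * deriv (deriv v) x + μp x * deriv v x - r * v x = 0)
    (hμ : ∀ x ∈ Icc L M, r * x ≤ μp x)
    (hvM : v M = M) (hvL : L ≤ v L) :
    ∀ x ∈ Icc L M, x ≤ v x := by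
  intro x hx
  have hperturbed : ∀ ε > 0, 0 ≤ v x + (ε * (exp M - exp x) - x) := by
    intro ε hε
    have hwL : 0 ≤ v L + (ε * (exp M - exp L) - L) := by
      have := mul_nonneg hε.le (sub_nonneg.mpr (exp_le_exp.mpr (hx.1.trans hx.2)))
      linarith
    refine nonneg_of_diffusionOp_neg (σ := σp) (μ := μp)
      (w := v + fun y ↦ ε * (exp M - exp y) - y) hr
      (hv.continuousOn.add (by fun_prop)) hwL (by simp [hvM]) (fun y hy ↦ ?_) x hx
    have hy' := Ioo_subset_Icc_self hy
    rw [diffusionOp_add (hv.contDiffAt (Icc_mem_nhds hy.1 hy.2)) (by fun_prop),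
      diffusionOp, hode y hy, zero_add]
    exact diffusionOp_exp_barrier_neg hr hε (hσpos y hy') (hμ y hy') (hL.trans hy.1).le hy.2.le
  have hlim : Tendsto (fun ε ↦ v x + (ε * (exp M - exp x) - x)) (𝓝[>] 0)
      (𝓝 (v x + (0 * (exp M - exp x) - x))) :=
    (Continuous.tendsto (by fun_prop) 0).mono_left nhdsWithin_le_nhds
  simpa using ge_of_tendsto hlim (eventually_nhdsWithin_of_forall hperturbed)

/-- Positive-regime part of Lemma A.2: if `v` is C² on `[L,M]`, solves
`(σ₊²/2) v'' + μ₊ v' − r v = 0` on `(L,M)` with `μ₊(x) ≥ r x`, `v(M) = M` and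
`v(L) ≥ L`, then `v(x) ≥ x` on `[L,M]`. -/
theorem value_dominates_identity_pos_regime
    (L M r : ℝ) (hL : 0 < L) (hLM : L < M) (hr : 0 ≤ r)
    (σp μp : ℝ → ℝ)
    (hσc : ContinuousOn σp (Icc L M)) (hσpos : ∀ x ∈ Icc L M, 0 < σp x)
    (hμc : ContinuousOn μp (Icc L M))
    (v : ℝ → ℝ) (hv : ContDiffOn ℝ 2 v (Icc L M))
    (hode : ∀ x ∈ Ioo L M,
      (σp x ^ 2 / 2) * deriv (deriv v) x + μp x * deriv v x - r * v x = 0)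
    (hμ : ∀ x ∈ Icc L M, r * x ≤ μp x)
    (hvM : v M = M) (hvL : L ≤ v L) :
    ∀ x ∈ Icc L M, x ≤ v x :=
  value_dominates_identity_pos_regime_general L M r hL hr σp μp hσpos v hv hode hμ hvM hvL
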